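/- If u and v are vertices of T at the same depth and u is to the left of v, then u precedes v in vEB_ε(T). Consequently, the vertices of any single level of T appear in vEB_ε(T) in their left-to-right order. -/

import Mathlib

namespace VEB

inductive OTree : Type where
  | node : List OTree → OTree

def OTree.children : OTree → List OTree
  | .node cs => cs

mutual
  def height : OTree → ℕ
    | .node cs => 1 + heightList cs
  def heightList : List OTree → ℕ
    | [] => 0
    | c :: cs => max (height c) (heightList cs)
end

def subtreeAt? : OTree → List ℕ → Option OTree
  | t, [] => some t
  | t, i :: p =>
    match t.children[i]? with
    | some c => subtreeAt? c p
    | none => none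

/-- `p` is (the path of) a vertex of `t`. -/
def IsVertex (t : OTree) (p : List ℕ) : Prop := (subtreeAt? t p).isSome

/-- `p` is a leaf of `t`. -/
def IsLeaf (t : OTree) (p : List ℕ) : Prop := subtreeAt? t p = some (.node [])

/-- All leaves of `t` are at the same depth (the bottom level). -/
def Uniform (t : OTree) : Prop := ∀ p, IsLeaf t p → p.length + 1 = height t

/-- The top `m+1` levels of `t` (the truncation of height `m+1`). -/
def trunc : ℕ → OTree → OTree
  | 0, _ => .node []
  | m+1, t => .node (t.children.map (trunc m))

/-- Paths of the vertices at depth `m`, in left-to-right order. -/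
def levelPaths : ℕ → OTree → List (List ℕ)
  | 0, _ => [[]]
  | m+1, t => (t.children.zipIdx.map fun ic => (levelPaths m ic.1).map (ic.2 :: ·)).flatten

/-- The level at which a tree of height `h` is cut: `max ⌊ε h⌋ 1`. -/
noncomputable def cutLevel (ε : ℝ) (h : ℕ) : ℕ := max ⌊ε * (h : ℝ)⌋₊ 1

/-- The van Emde Boas order of the vertex paths of `t` (with recursion fuel). -/
noncomputable def vEBAux (ε : ℝ) : ℕ → OTree → List (List ℕ)
  | 0, _ => []
  | fuel+1, t =>
    if height t ≤ 1 then [[]]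
    else
      let m := cutLevel ε (height t)
      vEBAux ε fuel (trunc (m - 1) t) ++
        ((levelPaths m t).map fun q =>
          match subtreeAt? t q with
          | some s => (vEBAux ε fuel s).map (q ++ ·)
          | none => []).flatten

/-- The van Emde Boas order `vEB_ε(t)` of the vertex paths of `t`. -/
noncomputable def vEB (ε : ℝ) (t : OTree) : List (List ℕ) := vEBAux ε (height t) t

/-- Position (index) of vertex `p` in the van Emde Boas order. -/
noncomputable def pos (ε : ℝ) (t : OTree) (p : List ℕ) : ℕ := (vEB ε t).idxOf p

/-- `A` is a set of vertices occupying consecutive positions in `vEB_ε(t)`. -/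
def MemInterval (ε : ℝ) (t : OTree) (A : Set (List ℕ)) : Prop :=
  ∃ i n, A = {p | p ∈ ((vEB ε t).drop i).take n}

/-- The vertices of the decomposition `D` of `t`: pairs `(p, k)` of the root path
and the height of a decomposition subtree (with recursion fuel). -/
noncomputable def decompAux (ε : ℝ) : ℕ → OTree → List (List ℕ × ℕ)
  | 0, _ => []
  | fuel+1, t =>
    if height t ≤ 1 then [([], 1)]
    else
      let m := cutLevel ε (height t)
      ([], height t) ::
        (decompAux ε fuel (trunc (m - 1) t) ++
          ((levelPaths m t).map fun q =>
            match subtreeAt? t q with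
            | some s => (decompAux ε fuel s).map fun r => (q ++ r.1, r.2)
            | none => []).flatten)

/-- The vertices of the decomposition `D` of `t`. -/
noncomputable def decompVerts (ε : ℝ) (t : OTree) : List (List ℕ × ℕ) :=
  decompAux ε (height t) t

/-- The children in the decomposition tree `D` of the decomposition vertex `(p, k)`:
the top tree followed by the bottom trees in left-to-right order. -/
noncomputable def dChildren (ε : ℝ) (t : OTree) (p : List ℕ) (k : ℕ) : List (List ℕ × ℕ) :=
  if k ≤ 1 then []
  else
    match subtreeAt? t p with
    | some s =>
      (p, cutLevel ε k) ::
        (levelPaths (cutLevel ε k) s).map fun q => (p ++ q, k - cutLevel ε k)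
    | none => []

/-- The decomposition subtree `(p, k)` contains the vertex `w` of `t`;
equivalently, the leaf `{w}` of `D` lies in the subtree of `D` rooted at `(p, k)`. -/
def DContains (p : List ℕ) (k : ℕ) (w : List ℕ) : Prop :=
  p <+: w ∧ w.length < p.length + k

/-- Vertex `v` is to the left of the branch with leaf `ℓ`. -/
def LeftOfBranch (v ℓ : List ℕ) : Prop := List.Lex (· < ·) v (ℓ.take v.length)

/-- Vertex `v` is to the right of the branch with leaf `ℓ`. -/
def RightOfBranch (v ℓ : List ℕ) : Prop := List.Lex (· < ·) (ℓ.take v.length) v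

/-- Every internal vertex of `t` has at least `a` children. -/
def MinArity (t : OTree) (a : ℕ) : Prop :=
  ∀ p s, subtreeAt? t p = some s → s.children ≠ [] → a ≤ s.children.length

/-- Every internal vertex of `t` has at most `b` children. -/
def MaxArity (t : OTree) (b : ℕ) : Prop :=
  ∀ p s, subtreeAt? t p = some s → s.children.length ≤ b

/-- `w` lies on the leftmost branch descending from `v` (always taking the leftmost child). -/
def OnLeftmostBranch (v w : List ℕ) : Prop :=
  v <+: w ∧ ∀ n (hn : n < w.length), v.length ≤ n → w.get ⟨n, hn⟩ = 0

/-- `w` lies on the rightmost branch descending from `v` (always taking the rightmost child). -/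
def OnRightmostBranch (t : OTree) (v w : List ℕ) : Prop :=
  v <+: w ∧ ∀ n (hn : n < w.length), v.length ≤ n →
    ∀ s, subtreeAt? t (w.take n) = some s → w.get ⟨n, hn⟩ + 1 = s.children.length

/-!
Restricting `vEB_ε(T)` to the vertices of a fixed depth `d` gives exactly the `d`-th level of
`T` in left-to-right order. Indeed, if `d` lies above the cut, only the top tree contributes, and
its depth-`d` vertices are those of `T`; otherwise, with `m` the cut level, only the bottom
trees contribute, in left-to-right order, each with its level `d - m` in order by induction, and
concatenating these is again the `d`-th level of `T`. Since a level is strictly increasing in the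
lexicographic order, the positions of `u` and `v` in that restriction, and hence in `vEB_ε(T)`,
are in the right order.
-/

theorem _root_.List.idxOf_lt_idxOf_of_filter {α : Type*} [BEq α] [LawfulBEq α] {p : α → Bool}
    {a b : α} (ha : p a) (hb : p b) :
    ∀ {l : List α}, (l.filter p).idxOf a < (l.filter p).idxOf b → l.idxOf a < l.idxOf b
  | [], h => by simp at h
  | x :: xs, h => by
    by_cases hxa : x = a
    · subst hxa
      have hxb : x ≠ b := by rintro rfl; exact lt_irrefl _ h
      simp [hxb]
    · by_cases hxb : x = b
      · subst hxb
        simp [hb] at h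
      · have ih := List.idxOf_lt_idxOf_of_filter ha hb (l := xs)
        by_cases hpx : p x <;> simp_all

theorem _root_.List.Pairwise.idxOf_lt_idxOf {α : Type*} [BEq α] [LawfulBEq α]
    {R : α → α → Prop} [Std.Asymm R] {l : List α} (hl : l.Pairwise R) {a b : α}
    (ha : a ∈ l) (hab : R a b) : l.idxOf a < l.idxOf b := by
  by_cases hb : b ∈ l
  · have hia := List.idxOf_lt_length_of_mem ha
    have hib := List.idxOf_lt_length_of_mem hb
    rcases lt_trichotomy (l.idxOf a) (l.idxOf b) with h | h | h
    · exact h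
    · exact absurd hab ((List.idxOf_inj ha).1 h ▸ irrefl a)
    · have hba := List.pairwise_iff_getElem.1 hl _ _ hib hia h
      rw [List.getElem_idxOf, List.getElem_idxOf] at hba
      exact absurd hab (asymm hba)
  · rw [List.idxOf_eq_length hb]
    exact List.idxOf_lt_length_of_mem ha

@[simp]
lemma height_node (cs : List OTree) : height (.node cs) = 1 + heightList cs := by
  simp [height]

lemma height_pos (t : OTree) : 0 < height t := by
  cases t; simp

lemma height_le_heightList {c : OTree} {cs : List OTree} (h : c ∈ cs) :
    height c ≤ heightList cs := by
  induction cs with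
  | nil => simp at h
  | cons x xs ih =>
    rw [heightList]
    rcases List.mem_cons.1 h with rfl | h
    · exact le_max_left _ _
    · exact (ih h).trans (le_max_right _ _)

lemma heightList_le_iff {cs : List OTree} {n : ℕ} :
    heightList cs ≤ n ↔ ∀ c ∈ cs, height c ≤ n := by
  induction cs with
  | nil => simp [heightList]
  | cons x xs ih => simp [heightList, ih]

lemma children_eq_nil_of_height_le_one {t : OTree} (h : height t ≤ 1) : t.children = [] := by
  obtain ⟨cs⟩ := t
  rw [height_node] at h
  refine List.eq_nil_iff_forall_not_mem.2 fun c (hc : c ∈ cs) => ?_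
  have := height_le_heightList hc
  have := height_pos c
  omega

lemma subtreeAt?_cons_of_getElem? {t c : OTree} {i : ℕ} (h : t.children[i]? = some c)
    (p : List ℕ) : subtreeAt? t (i :: p) = subtreeAt? c p := by
  simp [subtreeAt?, h]

lemma length_add_height_le_of_subtreeAt? {t s : OTree} {p : List ℕ}
    (h : subtreeAt? t p = some s) : p.length + height s ≤ height t := by
  induction p generalizing t with
  | nil => simp_all [subtreeAt?]
  | cons i p ih =>
    cases hc : t.children[i]? with
    | none => simp [subtreeAt?, hc] at h
    | some c =>
      rw [subtreeAt?_cons_of_getElem? hc] at h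
      have hc_le := height_le_heightList (List.mem_of_getElem? hc)
      have := ih h
      obtain ⟨cs⟩ := t
      simp only [OTree.children, height_node, List.length_cons] at hc_le ⊢
      omega

lemma height_trunc_le (k : ℕ) (t : OTree) : height (trunc k t) ≤ k + 1 := by
  induction k generalizing t with
  | zero => simp [trunc, heightList]
  | succ k ih =>
    have : heightList (t.children.map (trunc k)) ≤ k + 1 := by
      simpa [heightList_le_iff] using fun c _ => ih c
    simp only [trunc, height_node]
    omega

lemma mem_levelPaths {m : ℕ} {t : OTree} {q : List ℕ} :
    q ∈ levelPaths m t ↔ q.length = m ∧ IsVertex t q := by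
  induction m generalizing t q with
  | zero => cases q <;> simp [levelPaths, IsVertex, subtreeAt?]
  | succ m ih =>
    cases q with
    | nil => simp [levelPaths]
    | cons i q =>
      simp only [levelPaths, List.mem_flatten, List.mem_map, Prod.exists, List.length_cons,
        Nat.add_right_cancel_iff]
      cases hc : t.children[i]? with
      | none => simp [IsVertex, subtreeAt?, hc, List.mk_mem_zipIdx_iff_getElem?]
      | some c =>
        rw [IsVertex, subtreeAt?_cons_of_getElem? hc, ← IsVertex, ← ih]
        simp [List.mk_mem_zipIdx_iff_getElem?, hc]

lemma pairwise_levelPaths (m : ℕ) (t : OTree) :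
    (levelPaths m t).Pairwise (List.Lex (· < ·)) := by
  induction m generalizing t with
  | zero => simp [levelPaths]
  | succ m ih =>
    have hidx : (t.children.zipIdx).Pairwise (fun a b => a.2 < b.2) := by
      rw [← List.pairwise_map (f := Prod.snd), List.zipIdx_map_snd]
      exact List.pairwise_lt_range'
    simp only [levelPaths, List.pairwise_flatten, List.mem_map, List.pairwise_map]
    refine ⟨?_, hidx.imp ?_⟩
    · rintro _ ⟨⟨c, i⟩, -, rfl⟩
      exact List.pairwise_map.2 ((ih c).imp List.Lex.cons)
    · rintro ⟨c, i⟩ ⟨d, j⟩ hij x hx y hy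
      obtain ⟨x, -, rfl⟩ := hx
      obtain ⟨y, -, rfl⟩ := hy
      exact List.Lex.rel hij

lemma levelPaths_trunc (d k : ℕ) (t : OTree) :
    levelPaths d (trunc k t) = if d ≤ k then levelPaths d t else [] := by
  induction d generalizing k t with
  | zero => simp [levelPaths]
  | succ d ih =>
    cases k with
    | zero => simp [levelPaths, trunc, OTree.children]
    | succ k =>
      simp only [levelPaths, trunc, OTree.children, List.zipIdx_map, List.map_map,
        Function.comp_def, Prod.map, id, ih, Nat.add_le_add_iff_right]
      split_ifs <;> simp

/-- `f` of the subtree at `q`, re-rooted at `q`: the shape of the bottom-tree blocks of `vEBAux`. -/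
def graft (t : OTree) (f : OTree → List (List ℕ)) (q : List ℕ) : List (List ℕ) :=
  match subtreeAt? t q with
  | some s => (f s).map (q ++ ·)
  | none => []

lemma graft_of_subtreeAt?_eq_some {t s : OTree} {q : List ℕ} (h : subtreeAt? t q = some s)
    (f : OTree → List (List ℕ)) : graft t f q = (f s).map (q ++ ·) := by
  simp [graft, h]

lemma graft_congr {t : OTree} {f g : OTree → List (List ℕ)} {q : List ℕ}
    (h : ∀ s, subtreeAt? t q = some s → f s = g s) : graft t f q = graft t g q := by
  cases hs : subtreeAt? t q with
  | none => simp [graft, hs]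
  | some s => simp [graft_of_subtreeAt?_eq_some hs, h s hs]

lemma graft_cons {t c : OTree} {i : ℕ} (hc : t.children[i]? = some c)
    (f : OTree → List (List ℕ)) (q : List ℕ) :
    graft t f (i :: q) = (graft c f q).map (i :: ·) := by
  cases hs : subtreeAt? c q with
  | none => simp [graft, subtreeAt?_cons_of_getElem? hc, hs]
  | some s =>
    rw [graft_of_subtreeAt?_eq_some hs, graft_of_subtreeAt?_eq_some
      (by rwa [subtreeAt?_cons_of_getElem? hc]), List.map_map]
    rfl

lemma levelPaths_add (m k : ℕ) (t : OTree) :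
    levelPaths (m + k) t = (levelPaths m t).flatMap (graft t (levelPaths k)) := by
  induction m generalizing t with
  | zero => simp [levelPaths, graft, subtreeAt?]
  | succ m ih =>
    rw [Nat.add_right_comm, levelPaths, levelPaths, ← List.flatMap_def, ← List.flatMap_def,
      List.flatMap_assoc]
    refine List.flatMap_congr fun ⟨c, i⟩ hci => ?_
    have hc : t.children[i]? = some c := List.mk_mem_zipIdx_iff_getElem?.1 hci
    simp only [ih, List.map_flatMap, List.flatMap_map, graft_cons hc]

lemma cutLevel_lt {ε : ℝ} (hε1 : ε ≤ 1/2) {h : ℕ} (hh : 2 ≤ h) : cutLevel ε h < h := by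
  have hfloor : ⌊ε * (h : ℝ)⌋₊ ≤ h / 2 :=
    calc ⌊ε * (h : ℝ)⌋₊ ≤ ⌊(h : ℝ) / 2⌋₊ :=
          Nat.floor_le_floor (by nlinarith [h.cast_nonneg' (α := ℝ)])
      _ = h / 2 := by rw [Nat.floor_div_ofNat, Nat.floor_natCast]
  exact max_lt (by omega) (by omega)

lemma vEBAux_succ (ε : ℝ) (fuel : ℕ) {t : OTree} (h : ¬ height t ≤ 1) :
    vEBAux ε (fuel + 1) t =
      vEBAux ε fuel (trunc (cutLevel ε (height t) - 1) t) ++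
        (levelPaths (cutLevel ε (height t)) t).flatMap (graft t (vEBAux ε fuel)) := by
  rw [vEBAux, if_neg h]
  rfl

lemma vEBAux_of_height_le_one (ε : ℝ) (fuel : ℕ) {t : OTree} (h : height t ≤ 1) :
    vEBAux ε (fuel + 1) t = [[]] := by
  rw [vEBAux, if_pos h]

lemma filter_graft_length_of_lt (t : OTree) (f : OTree → List (List ℕ)) {q : List ℕ} {d : ℕ}
    (hd : d < q.length) : (graft t f q).filter (·.length = d) = [] := by
  cases hs : subtreeAt? t q with
  | none => simp [graft, hs]
  | some s =>
    simp only [graft_of_subtreeAt?_eq_some hs, List.filter_map, List.map_eq_nil_iff,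
      List.filter_eq_nil_iff]
    intro r _
    simp only [Function.comp_apply, List.length_append, decide_eq_true_eq]
    omega

lemma filter_graft_length_add (t : OTree) (f : OTree → List (List ℕ)) (q : List ℕ) (k : ℕ) :
    (graft t f q).filter (·.length = q.length + k) =
      graft t (fun s => (f s).filter (·.length = k)) q := by
  cases hs : subtreeAt? t q with
  | none => simp [graft, hs]
  | some s => simp [graft_of_subtreeAt?_eq_some hs, List.filter_map, Function.comp_def]

lemma filter_length_vEBAux {ε : ℝ} (hε1 : ε ≤ 1/2) (fuel : ℕ) {t : OTree}
    (ht : height t ≤ fuel) (d : ℕ) :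
    (vEBAux ε fuel t).filter (·.length = d) = levelPaths d t := by
  induction fuel generalizing t d with
  | zero => exact absurd ht (height_pos t).not_ge
  | succ fuel ih =>
    by_cases h1 : height t ≤ 1
    · rw [vEBAux_of_height_le_one ε fuel h1]
      obtain ⟨cs⟩ := t
      obtain rfl : cs = [] := children_eq_nil_of_height_le_one h1
      cases d <;> simp [levelPaths, OTree.children]
    rw [vEBAux_succ ε fuel h1]
    set m := cutLevel ε (height t)
    have hm_pos : 1 ≤ m := le_max_right _ _
    have hm_lt : m < height t := cutLevel_lt hε1 (by omega)
    have htop : height (trunc (m - 1) t) ≤ fuel := by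
      have := height_trunc_le (m - 1) t
      omega
    rw [List.filter_append, List.filter_flatMap, ih htop, levelPaths_trunc]
    by_cases hd : d < m
    · rw [if_pos (by omega), List.flatMap_eq_nil_iff.2, List.append_nil]
      intro q hq
      exact filter_graft_length_of_lt t _ ((mem_levelPaths.1 hq).1 ▸ hd)
    · obtain ⟨k, rfl⟩ : ∃ k, d = m + k := ⟨d - m, by omega⟩
      rw [if_neg (by omega), List.nil_append, levelPaths_add]
      refine List.flatMap_congr fun q hq => ?_
      have hq_len := (mem_levelPaths.1 hq).1
      rw [← hq_len, filter_graft_length_add]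
      refine graft_congr fun s hs => ih ?_ k
      have := length_add_height_le_of_subtreeAt? hs
      omega

lemma filter_length_vEB {ε : ℝ} (hε1 : ε ≤ 1/2) (t : OTree) (d : ℕ) :
    (vEB ε t).filter (·.length = d) = levelPaths d t :=
  filter_length_vEBAux hε1 _ le_rfl d

/-- If `u` and `v` are vertices at the same depth and `u` is to the left
of `v`, then `u` precedes `v` in `vEB_ε(T)`; consequently each level appears in `vEB_ε(T)`
in its left-to-right order. -/
theorem level_order_preserved
    (ε : ℝ) (hε0 : 0 < ε) (hε1 : ε ≤ 1/2) (t : OTree) (ht : Uniform t)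
    (u v : List ℕ) (hu : IsVertex t u) (hv : IsVertex t v)
    (hlen : u.length = v.length) (hlex : List.Lex (· < ·) u v) :
    pos ε t u < pos ε t v := by
  refine List.idxOf_lt_idxOf_of_filter (p := (·.length = u.length)) (by simp) (by simp [hlen]) ?_
  rw [filter_length_vEB hε1]
  exact (pairwise_levelPaths _ t).idxOf_lt_idxOf (mem_levelPaths.2 ⟨rfl, hu⟩) hlex

end VEB
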